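/- Let T > 0, k ≥ 0, and let g, G : ℝ^(k+1) → ℝ be continuous with g(0) = 0, G(0) = 0, and G either nonnegative everywhere or nonpositive everywhere. Let u : [0,T)×ℝ → ℝ be such that u(t,·) is k-times continuously differentiable for each t with all derivatives up to order k continuous in x; the function x ↦ G(u(t,x), ∂ₓu(t,x), …, ∂ₓᵏu(t,x)) is continuous, bounded and integrable for each t; ∂ₜu exists on (0,T)×ℝ; and the equation ∂ₜu(t,x) + g(u(t,x), …, ∂ₓᵏu(t,x)) = (∂ₓΛ⁻²[G(u(t,·), …, ∂ₓᵏu(t,·))])(x) holds for all (t,x) ∈ (0,T)×ℝ. Assume: (i) for each t, if G(u(t,x), …, ∂ₓᵏu(t,x)) = 0 for all x ∈ ℝ then u(t,x) = 0 for all x ∈ ℝ; (ii) u vanishes identically on a nonempty open set Ω ⊆ (0,T)×ℝ; (iii) either there is a conserved density h for u, or the uniqueness property holds that u(t₁,·) ≡ 0 for some t₁ ∈ (0,T) implies u ≡ 0. Then u(t,x) = 0 for all (t,x) ∈ [0,T)×ℝ. -/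

import Mathlib

/-!
Pick a point `(t₁, x₀)` of `Ω`. Near `x₀` the jet of `u(t₁, ·)` and `∂ₜu(t₁, ·)` vanish, so the
equation gives `∂ₓΛ⁻²w = 0` near `x₀`, where `w = G([u(t₁, ·)])`. Differentiating once more and
using `∂ₓ²Λ⁻² = Λ⁻² - 1` yields `Λ⁻²w(x₀) = w(x₀) = 0`. As `w` has a sign and the kernel
`e^{-|x|}/2` is positive, `w ≡ 0`, hence `u(t₁, ·) ≡ 0` by (i). Then either the uniqueness
property applies, or the signed conserved density has total integral `0` at every time, so it
vanishes identically, and with it the jet of `u`.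
-/

open MeasureTheory Set

/-- The inverse Helmholtz operator `Λ⁻² = (1 - ∂ₓ²)⁻¹` on the line, given by
convolution with the kernel `e^{-|x|}/2`. -/
noncomputable def lam2 (w : ℝ → ℝ) (x : ℝ) : ℝ :=
  (1/2) * ∫ y : ℝ, Real.exp (-|x - y|) * w y

open Filter Topology Real

theorem Continuous.eq_zero_of_integral_eq_zero_of_nonneg {X : Type*} [TopologicalSpace X]
    [MeasurableSpace X] {μ : Measure X} [μ.IsOpenPosMeasure] {f : X → ℝ} (hf : Continuous f)
    (hf0 : 0 ≤ f) (hfi : Integrable f μ) (h : ∫ x, f x ∂μ = 0) : f = 0 :=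
  (hf.ae_eq_iff_eq μ continuous_zero).1 ((integral_eq_zero_iff_of_nonneg hf0 hfi).1 h)

theorem Continuous.eq_zero_of_integral_eq_zero_of_signed {X : Type*} [TopologicalSpace X]
    [MeasurableSpace X] {μ : Measure X} [μ.IsOpenPosMeasure] {f : X → ℝ} (hf : Continuous f)
    (hsign : (∀ x, 0 ≤ f x) ∨ (∀ x, f x ≤ 0)) (hfi : Integrable f μ)
    (h : ∫ x, f x ∂μ = 0) : f = 0 := by
  rcases hsign with hnonneg | hnonpos
  · exact hf.eq_zero_of_integral_eq_zero_of_nonneg hnonneg hfi h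
  · refine neg_eq_zero.1 (hf.neg.eq_zero_of_integral_eq_zero_of_nonneg
      (fun x => neg_nonneg.2 (hnonpos x)) hfi.neg ?_)
    simp only [Pi.neg_apply, integral_neg, h, neg_zero]

theorem hasDerivAt_setIntegral_Iic {f : ℝ → ℝ} (hf : Continuous f)
    (hfi : ∀ a, IntegrableOn f (Iic a)) (x : ℝ) :
    HasDerivAt (fun x => ∫ y in Iic x, f y) (f x) x := by
  have hsplit : (fun x => ∫ y in Iic x, f y) = fun x => (∫ y in Iic 0, f y) + ∫ y in 0..x, f y := by
    funext x
    rw [← intervalIntegral.integral_Iic_sub_Iic (hfi 0) (hfi x), add_sub_cancel]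
  rw [hsplit]
  exact (hf.integral_hasStrictDerivAt 0 x).hasDerivAt.const_add _

theorem hasDerivAt_setIntegral_Ioi {f : ℝ → ℝ} (hf : Continuous f)
    (hfi : ∀ a, IntegrableOn f (Ioi a)) (x : ℝ) :
    HasDerivAt (fun x => ∫ y in Ioi x, f y) (-f x) x := by
  have hsplit : (fun x => ∫ y in Ioi x, f y) = fun x => (∫ y in Ioi 0, f y) - ∫ y in 0..x, f y := by
    funext x
    rw [← intervalIntegral.integral_Ioi_sub_Ioi' (hfi 0) (hfi x), sub_sub_cancel]
  rw [hsplit]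
  exact (hf.integral_hasStrictDerivAt 0 x).hasDerivAt.const_sub _

section Helmholtz

variable {w : ℝ → ℝ}

theorem MeasureTheory.Integrable.integrableOn_exp_mul_Iic (hw : Integrable w) (x : ℝ) :
    IntegrableOn (fun y => exp y * w y) (Iic x) := by
  refine hw.integrableOn.bdd_mul (c := exp x) continuous_exp.aestronglyMeasurable ?_
  filter_upwards [ae_restrict_mem measurableSet_Iic] with y hy
  simpa using exp_le_exp.2 hy

theorem MeasureTheory.Integrable.integrableOn_exp_neg_mul_Ioi (hw : Integrable w) (x : ℝ) :
    IntegrableOn (fun y => exp (-y) * w y) (Ioi x) := by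
  refine hw.integrableOn.bdd_mul (c := exp (-x))
    (continuous_exp.comp continuous_neg).aestronglyMeasurable ?_
  filter_upwards [ae_restrict_mem measurableSet_Ioi] with y hy
  simpa using exp_le_exp.2 (neg_le_neg (le_of_lt hy))

theorem MeasureTheory.Integrable.integrable_exp_neg_abs_sub_mul (hw : Integrable w) (x : ℝ) :
    Integrable (fun y => exp (-|x - y|) * w y) := by
  refine hw.bdd_mul (c := 1) (by fun_prop) (Eventually.of_forall fun y => ?_)
  simp

theorem lam2_eq_integral_Iic_add_integral_Ioi (hw : Integrable w) (x : ℝ) :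
    lam2 w x = (exp (-x) * (∫ y in Iic x, exp y * w y) +
      exp x * ∫ y in Ioi x, exp (-y) * w y) / 2 := by
  have hleft : ∫ y in Iic x, exp (-|x - y|) * w y = exp (-x) * ∫ y in Iic x, exp y * w y := by
    rw [← integral_const_mul]
    refine setIntegral_congr_fun measurableSet_Iic fun y (hy : y ≤ x) => ?_
    rw [abs_of_nonneg (sub_nonneg.2 hy), ← mul_assoc, ← exp_add]
    ring_nf
  have hright : ∫ y in Ioi x, exp (-|x - y|) * w y = exp x * ∫ y in Ioi x, exp (-y) * w y := by
    rw [← integral_const_mul]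
    refine setIntegral_congr_fun measurableSet_Ioi fun y (hy : x < y) => ?_
    rw [abs_sub_comm, abs_of_pos (sub_pos.2 hy), ← mul_assoc, ← exp_add]
    ring_nf
  have hint := hw.integrable_exp_neg_abs_sub_mul x
  rw [lam2, ← intervalIntegral.integral_Iic_add_Ioi hint.integrableOn hint.integrableOn,
    hleft, hright]
  ring

noncomputable def derivLam2 (w : ℝ → ℝ) (x : ℝ) : ℝ :=
  (exp x * (∫ y in Ioi x, exp (-y) * w y) - exp (-x) * ∫ y in Iic x, exp y * w y) / 2

theorem hasDerivAt_lam2 (hc : Continuous w) (hw : Integrable w) (x : ℝ) :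
    HasDerivAt (lam2 w) (derivLam2 w x) x := by
  have hA := hasDerivAt_setIntegral_Iic (by fun_prop) hw.integrableOn_exp_mul_Iic x
  have hB := hasDerivAt_setIntegral_Ioi (by fun_prop) hw.integrableOn_exp_neg_mul_Ioi x
  have hsum := (((hasDerivAt_neg x).exp.mul hA).add ((hasDerivAt_exp x).mul hB)).div_const 2
  rw [show lam2 w = _ from funext (lam2_eq_integral_Iic_add_integral_Ioi hw)]
  exact hsum.congr_deriv (by simp only [derivLam2]; ring)

theorem hasDerivAt_derivLam2 (hc : Continuous w) (hw : Integrable w) (x : ℝ) :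
    HasDerivAt (derivLam2 w) (lam2 w x - w x) x := by
  have hA := hasDerivAt_setIntegral_Iic (by fun_prop) hw.integrableOn_exp_mul_Iic x
  have hB := hasDerivAt_setIntegral_Ioi (by fun_prop) hw.integrableOn_exp_neg_mul_Ioi x
  have hdiff := (((hasDerivAt_exp x).mul hB).sub ((hasDerivAt_neg x).exp.mul hA)).div_const 2
  have hexp : exp (-x) * exp x = 1 := by rw [← exp_add, neg_add_cancel, exp_zero]
  refine hdiff.congr_deriv ?_
  rw [lam2_eq_integral_Iic_add_integral_Ioi hw]
  linear_combination -(w x) * hexp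

theorem lam2_eq_self_of_deriv_lam2_eventuallyEq_zero (hc : Continuous w) (hw : Integrable w)
    {x₀ : ℝ} (hd : deriv (lam2 w) =ᶠ[𝓝 x₀] 0) : lam2 w x₀ = w x₀ := by
  have hD : derivLam2 w =ᶠ[𝓝 x₀] 0 := by
    rwa [show deriv (lam2 w) = derivLam2 w from funext fun x => (hasDerivAt_lam2 hc hw x).deriv]
      at hd
  have h := (hasDerivAt_derivLam2 hc hw x₀).deriv
  rw [hD.deriv_eq] at h
  simpa [sub_eq_zero, eq_comm] using h

theorem eq_zero_of_lam2_eq_zero (hc : Continuous w) (hw : Integrable w)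
    (hsign : (∀ x, 0 ≤ w x) ∨ (∀ x, w x ≤ 0)) {x₀ : ℝ} (h : lam2 w x₀ = 0) : w = 0 := by
  have hkernel : (fun y => exp (-|x₀ - y|) * w y) = 0 := by
    refine Continuous.eq_zero_of_integral_eq_zero_of_signed (by fun_prop) ?_
      (hw.integrable_exp_neg_abs_sub_mul x₀) (by simpa [lam2] using h)
    exact hsign.imp (fun h y => mul_nonneg (exp_pos _).le (h y))
      (fun h y => mul_nonpos_of_nonneg_of_nonpos (exp_pos _).le (h y))
  funext y
  simpa [(exp_pos _).ne'] using congrFun hkernel y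

end Helmholtz

-- Reducible, so that it matches the jets `fun i => iteratedDeriv i.1 (u t) x` of the theorem.
noncomputable abbrev jet (k : ℕ) (f : ℝ → ℝ) (x : ℝ) : Fin (k + 1) → ℝ :=
  fun i => iteratedDeriv i f x

theorem jet_eq_zero_of_eventuallyEq_zero {k : ℕ} {f : ℝ → ℝ} {x : ℝ} (hf : f =ᶠ[𝓝 x] 0) :
    jet k f x = 0 := by
  funext i
  simpa using hf.iteratedDeriv_eq i

theorem continuous_jet {k : ℕ} {f : ℝ → ℝ} (hf : ContDiff ℝ (k : ℕ∞) f) : Continuous (jet k f) :=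
  continuous_pi fun i => hf.continuous_iteratedDeriv i (by exact_mod_cast i.is_le)

theorem eventually_slices_eventuallyEq_zero {u : ℝ → ℝ → ℝ} {t x : ℝ}
    (h : ∀ᶠ q in 𝓝 (t, x), u q.1 q.2 = 0) :
    ∀ᶠ y in 𝓝 x, (fun s => u s y) =ᶠ[𝓝 t] 0 ∧ u t =ᶠ[𝓝 y] 0 := by
  filter_upwards [(Continuous.prodMk_right t).tendsto x |>.eventually h.eventually_nhds]
    with y hy
  exact ⟨((Continuous.prodMk_left y).tendsto t).eventually hy,
    ((Continuous.prodMk_right t).tendsto y).eventually hy⟩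

theorem eq_zero_of_conserved_density {k : ℕ} {I : Set ℝ} {u : ℝ → ℝ → ℝ}
    {h : (Fin (k + 1) → ℝ) → ℝ} (hc : Continuous h) (hsign : (∀ y, 0 ≤ h y) ∨ (∀ y, h y ≤ 0))
    (hzero : ∀ y, h y = 0 ↔ y = 0) (hreg : ∀ t ∈ I, ContDiff ℝ (k : ℕ∞) (u t))
    (hint : ∀ t ∈ I, Integrable fun x => h (jet k (u t) x))
    (hcons : ∃ c, ∀ t ∈ I, ∫ x, h (jet k (u t) x) = c)
    {t₁ : ℝ} (ht₁ : t₁ ∈ I) (hu₁ : ∀ x, u t₁ x = 0) : ∀ t ∈ I, ∀ x, u t x = 0 := by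
  obtain ⟨c, hc_eq⟩ := hcons
  have hc0 : c = 0 := by
    have hjet : ∀ x, jet k (u t₁) x = 0 := fun x =>
      jet_eq_zero_of_eventuallyEq_zero (Eventually.of_forall hu₁)
    rw [← hc_eq t₁ ht₁]
    simp [hjet, (hzero 0).2 rfl]
  intro t ht x
  have hH : (fun x => h (jet k (u t) x)) = 0 :=
    (hc.comp (continuous_jet (hreg t ht))).eq_zero_of_integral_eq_zero_of_signed
      (hsign.imp (fun h x => h _) (fun h x => h _)) (hint t ht) (hc_eq t ht ▸ hc0)
  simpa [jet] using congrFun ((hzero _).1 (congrFun hH x)) 0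

theorem unique_continuation_nonlocal_scalar_general
    (T : ℝ) (k : ℕ)
    (g G : (Fin (k+1) → ℝ) → ℝ)
    (hg0 : g 0 = 0) (hG0 : G 0 = 0)
    (hGsign : (∀ y, 0 ≤ G y) ∨ (∀ y, G y ≤ 0))
    (u : ℝ → ℝ → ℝ)
    -- u(t,·) is k-times continuously differentiable
    (hreg : ∀ t ∈ Set.Ico (0:ℝ) T, ContDiff ℝ (k : ℕ∞) (u t))
    -- x ↦ G(k-jet of u(t,·) at x) is continuous, bounded and integrable
    (hGreg : ∀ t ∈ Set.Ico (0:ℝ) T,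
      Continuous (fun x : ℝ => G (fun i => iteratedDeriv i.1 (u t) x)) ∧
      (∃ C : ℝ, ∀ x : ℝ, |G (fun i => iteratedDeriv i.1 (u t) x)| ≤ C) ∧
      Integrable (fun x : ℝ => G (fun i => iteratedDeriv i.1 (u t) x)))
    -- the equation uₜ + g([u]) = ∂ₓΛ⁻²G([u]) holds pointwise
    (heq : ∀ t ∈ Set.Ioo (0:ℝ) T, ∀ x : ℝ,
      deriv (fun s => u s x) t + g (fun i => iteratedDeriv i.1 (u t) x) =
        deriv (lam2 (fun y => G (fun i => iteratedDeriv i.1 (u t) y))) x)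
    -- (i) vanishing of G([u(t,·)]) implies vanishing of u(t,·)
    (hGvan : ∀ t ∈ Set.Ico (0:ℝ) T,
      (∀ x : ℝ, G (fun i => iteratedDeriv i.1 (u t) x) = 0) → ∀ x : ℝ, u t x = 0)
    -- (ii) u vanishes identically on a nonempty open set Ω ⊆ (0,T) × ℝ
    (Ω : Set (ℝ × ℝ)) (hΩopen : IsOpen Ω) (hΩne : Ω.Nonempty)
    (hΩsub : Ω ⊆ Set.Ioo (0:ℝ) T ×ˢ Set.univ)
    (hvan : ∀ p ∈ Ω, u p.1 p.2 = 0)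
    -- (iii) either a conserved density exists, or the uniqueness property holds
    (hiii :
      (∃ h : (Fin (k+1) → ℝ) → ℝ, Continuous h ∧
        ((∀ y, 0 ≤ h y) ∨ (∀ y, h y ≤ 0)) ∧
        (∀ y, h y = 0 ↔ y = 0) ∧
        (∀ t ∈ Set.Ico (0:ℝ) T,
          Integrable (fun x : ℝ => h (fun i => iteratedDeriv i.1 (u t) x))) ∧
        (∃ c : ℝ, ∀ t ∈ Set.Ico (0:ℝ) T,
          (∫ x : ℝ, h (fun i => iteratedDeriv i.1 (u t) x)) = c)) ∨
      (∀ t₁ ∈ Set.Ioo (0:ℝ) T, (∀ x : ℝ, u t₁ x = 0) →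
        ∀ t ∈ Set.Ico (0:ℝ) T, ∀ x : ℝ, u t x = 0)) :
    ∀ t ∈ Set.Ico (0:ℝ) T, ∀ x : ℝ, u t x = 0 := by
  obtain ⟨⟨t₁, x₀⟩, hp⟩ := hΩne
  have ht₁ : t₁ ∈ Ioo 0 T := (hΩsub hp).1
  have hslices :=
    eventually_slices_eventuallyEq_zero (eventually_of_mem (hΩopen.mem_nhds hp) hvan)
  obtain ⟨hGc, -, hGi⟩ := hGreg t₁ (Ioo_subset_Ico_self ht₁)
  have hlam : deriv (lam2 fun y => G (jet k (u t₁) y)) =ᶠ[𝓝 x₀] 0 := by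
    filter_upwards [hslices] with x ⟨htime, hspace⟩
    calc deriv (lam2 fun y => G (jet k (u t₁) y)) x
        = deriv (fun s => u s x) t₁ + g (jet k (u t₁) x) := (heq t₁ ht₁ x).symm
      _ = 0 := by simp [htime.deriv_eq, jet_eq_zero_of_eventuallyEq_zero hspace, hg0]
  have hG₁ : (fun x => G (jet k (u t₁) x)) = 0 := by
    refine eq_zero_of_lam2_eq_zero (x₀ := x₀) hGc hGi
      (hGsign.imp (fun h x => h _) (fun h x => h _)) ?_
    have hjet₀ : jet k (u t₁) x₀ = 0 := jet_eq_zero_of_eventuallyEq_zero hslices.self_of_nhds.2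
    exact (lam2_eq_self_of_deriv_lam2_eventuallyEq_zero hGc hGi hlam).trans
      ((congrArg G hjet₀).trans hG0)
  have hu₁ := hGvan t₁ (Ioo_subset_Ico_self ht₁) (congrFun hG₁)
  rcases hiii with ⟨h, hc, hsign, hzero, hint, hcons⟩ | huniq
  · exact eq_zero_of_conserved_density hc hsign hzero hreg hint hcons
      (Ioo_subset_Ico_self ht₁) hu₁
  · exact huniq t₁ ht₁ hu₁

/-- **Theorem 3.1.** Unique continuation for scalar equations
`uₜ + g([u]) = ∂ₓ Λ⁻² G([u])`, where `g`, `G` depend on the `k`-jet of `u`, `G` is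
signed, vanishing of `G([u(t,·)])` forces `u(t,·) ≡ 0`, `u` vanishes on a nonempty
open set, and either a conserved density exists (C0) or the uniqueness property (C7')
holds. -/
theorem unique_continuation_nonlocal_scalar
    (T : ℝ) (hT : 0 < T) (k : ℕ)
    (g G : (Fin (k+1) → ℝ) → ℝ)
    (hgcont : Continuous g) (hGcont : Continuous G)
    (hg0 : g 0 = 0) (hG0 : G 0 = 0)
    (hGsign : (∀ y, 0 ≤ G y) ∨ (∀ y, G y ≤ 0))
    (u : ℝ → ℝ → ℝ)
    -- u(t,·) is k-times continuously differentiable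
    (hreg : ∀ t ∈ Set.Ico (0:ℝ) T, ContDiff ℝ (k : ℕ∞) (u t))
    -- x ↦ G(k-jet of u(t,·) at x) is continuous, bounded and integrable
    (hGreg : ∀ t ∈ Set.Ico (0:ℝ) T,
      Continuous (fun x : ℝ => G (fun i => iteratedDeriv i.1 (u t) x)) ∧
      (∃ C : ℝ, ∀ x : ℝ, |G (fun i => iteratedDeriv i.1 (u t) x)| ≤ C) ∧
      Integrable (fun x : ℝ => G (fun i => iteratedDeriv i.1 (u t) x)))
    -- ∂ₜu exists on (0,T) × ℝ
    (hut : ∀ t ∈ Set.Ioo (0:ℝ) T, ∀ x : ℝ, DifferentiableAt ℝ (fun s => u s x) t)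
    -- the equation uₜ + g([u]) = ∂ₓΛ⁻²G([u]) holds pointwise
    (heq : ∀ t ∈ Set.Ioo (0:ℝ) T, ∀ x : ℝ,
      deriv (fun s => u s x) t + g (fun i => iteratedDeriv i.1 (u t) x) =
        deriv (lam2 (fun y => G (fun i => iteratedDeriv i.1 (u t) y))) x)
    -- (i) vanishing of G([u(t,·)]) implies vanishing of u(t,·)
    (hGvan : ∀ t ∈ Set.Ico (0:ℝ) T,
      (∀ x : ℝ, G (fun i => iteratedDeriv i.1 (u t) x) = 0) → ∀ x : ℝ, u t x = 0)
    -- (ii) u vanishes identically on a nonempty open set Ω ⊆ (0,T) × ℝ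
    (Ω : Set (ℝ × ℝ)) (hΩopen : IsOpen Ω) (hΩne : Ω.Nonempty)
    (hΩsub : Ω ⊆ Set.Ioo (0:ℝ) T ×ˢ Set.univ)
    (hvan : ∀ p ∈ Ω, u p.1 p.2 = 0)
    -- (iii) either a conserved density exists, or the uniqueness property holds
    (hiii :
      (∃ h : (Fin (k+1) → ℝ) → ℝ, Continuous h ∧
        ((∀ y, 0 ≤ h y) ∨ (∀ y, h y ≤ 0)) ∧
        (∀ y, h y = 0 ↔ y = 0) ∧
        (∀ t ∈ Set.Ico (0:ℝ) T,
          Integrable (fun x : ℝ => h (fun i => iteratedDeriv i.1 (u t) x))) ∧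
        (∃ c : ℝ, ∀ t ∈ Set.Ico (0:ℝ) T,
          (∫ x : ℝ, h (fun i => iteratedDeriv i.1 (u t) x)) = c)) ∨
      (∀ t₁ ∈ Set.Ioo (0:ℝ) T, (∀ x : ℝ, u t₁ x = 0) →
        ∀ t ∈ Set.Ico (0:ℝ) T, ∀ x : ℝ, u t x = 0)) :
    ∀ t ∈ Set.Ico (0:ℝ) T, ∀ x : ℝ, u t x = 0 :=
  unique_continuation_nonlocal_scalar_general T k g G hg0 hG0 hGsign u hreg hGreg heq hGvan Ω hΩopen
    hΩne hΩsub hvan hiii
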